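/- arXiv:2508.03585 — 2 statements merged into one kernel-verified Lean document; each statement's English description precedes it below -/
import Mathlib

section
/- Let f be holomorphic and injective on an open disc D(λ, r) ⊆ ℂ with |f'| ≥ τ > 0 on D(λ, r). Then the image f(D(λ, r)) contains the open disc D(f(λ), τr/4). -/
/-- Koebe-type covering: if `f` is holomorphic and injective on `D(l, r)` with
`|f'| ≥ τ > 0` there, then `f(D(l, r))` contains `D(f(l), τ r / 4)`. -/
theorem image_contains_disc_of_univalent
    (l : ℂ) (r τ : ℝ) (hr : 0 < r) (hτ : 0 < τ) (f : ℂ → ℂ)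
    (hf : DifferentiableOn ℂ f (Metric.ball l r))
    (hinj : Set.InjOn f (Metric.ball l r))
    (hderiv : ∀ z ∈ Metric.ball l r, τ ≤ ‖deriv f z‖) :
    Metric.ball (f l) (τ * r / 4) ⊆ f '' Metric.ball l r := by
  set B := Metric.ball l r with hB
  set I := f '' B with hI
  have hlB : l ∈ B := Metric.mem_ball_self hr
  have hana : AnalyticOnNhd ℂ f B := hf.analyticOnNhd Metric.isOpen_ball
  -- strict derivative at each point of B
  have hstrict : ∀ z ∈ B, HasStrictDerivAt f (deriv f z) z := by
    intro z hz
    obtain ⟨p, hp⟩ := hana z hz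
    exact hp.hasStrictDerivAt.hasDerivAt.deriv ▸ hp.hasStrictDerivAt
  have hne : ∀ z ∈ B, deriv f z ≠ 0 := by
    intro z hz h0
    have := hderiv z hz
    rw [h0, norm_zero] at this
    linarith
  -- the image is open
  have hIopen : IsOpen I := by
    rcases hana.is_constant_or_isOpen (convex_ball l r).isPreconnected with ⟨w, hw⟩ | h
    · exfalso
      have hconst : ∀ᶠ z in nhds l, f z = w :=
        Filter.eventually_of_mem (Metric.isOpen_ball.mem_nhds hlB) hw
      have : deriv f l = 0 := by
        have h1 : f =ᶠ[nhds l] fun _ => w := hconst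
        rw [h1.deriv_eq, deriv_const]
      exact hne l hlB this
    · exact h B subset_rfl Metric.isOpen_ball
  -- the inverse function
  set g : ℂ → ℂ := Function.invFunOn f B with hg
  have hgf : ∀ x ∈ B, g (f x) = x := fun x hx => hinj.leftInvOn_invFunOn hx
  have hkey : ∀ w ∈ I, g w ∈ B ∧ f (g w) = w ∧ DifferentiableAt ℂ g w ∧
      ‖deriv g w‖ ≤ τ⁻¹ := by
    rintro w ⟨z, hz, rfl⟩
    have hgz : g (f z) = z := hgf z hz
    have hev : ∀ᶠ x in nhds z, g (f x) = x :=
      Filter.eventually_of_mem (Metric.isOpen_ball.mem_nhds hz) hgf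
    have hginv : HasStrictDerivAt g (deriv f z)⁻¹ (f z) :=
      (hstrict z hz).to_local_left_inverse (hne z hz) hev
    refine ⟨by rw [hgz]; exact hz, by rw [hgz], hginv.hasDerivAt.differentiableAt, ?_⟩
    rw [hginv.hasDerivAt.deriv, norm_inv]
    exact inv_anti₀ hτ (hderiv z hz)
  -- Lipschitz bound for g on convex subsets of I
  have hlip : ∀ s : Set ℂ, Convex ℝ s → s ⊆ I → ∀ x ∈ s, ∀ y ∈ s,
      ‖g y - g x‖ ≤ τ⁻¹ * ‖y - x‖ := by
    intro s hs hsI x hx y hy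
    exact hs.norm_image_sub_le_of_norm_deriv_le
      (fun u hu => (hkey u (hsI hu)).2.2.1)
      (fun u hu => (hkey u (hsI hu)).2.2.2) hx hy
  have hgl : g (f l) = l := hgf l hlB
  -- the supremum construction
  set S : Set ℝ := {s : ℝ | s ≤ τ * r / 2 ∧ Metric.ball (f l) s ⊆ I} with hS
  have h0S : (0 : ℝ) ∈ S := ⟨by positivity, by simp [Metric.ball_eq_empty.mpr le_rfl]⟩
  have hSne : S.Nonempty := ⟨0, h0S⟩
  have hSbdd : BddAbove S := ⟨τ * r / 2, fun s hs => hs.1⟩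
  set s₀ := sSup S with hs₀def
  have hs₀0 : 0 ≤ s₀ := le_csSup hSbdd h0S
  have hs₀le : s₀ ≤ τ * r / 2 := csSup_le hSne fun s hs => hs.1
  -- the open ball of radius s₀ is in I
  have hball : Metric.ball (f l) s₀ ⊆ I := by
    intro w hw
    obtain ⟨s, hsS, hws⟩ := exists_lt_of_lt_csSup hSne (Metric.mem_ball.mp hw)
    exact hsS.2 (Metric.mem_ball.mpr hws)
  -- the closed ball of radius s₀ is in I
  have hcball : Metric.closedBall (f l) s₀ ⊆ I := by
    intro w hw
    rcases eq_or_ne w (f l) with rfl | hwne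
    · exact ⟨l, hlB, rfl⟩
    have hwpos : 0 < ‖w - f l‖ := by
      rw [norm_pos_iff, sub_ne_zero]; exact hwne
    have hwle : ‖w - f l‖ ≤ s₀ := by
      rw [← dist_eq_norm]; exact Metric.mem_closedBall.mp hw
    have hs₀pos : 0 < s₀ := lt_of_lt_of_le hwpos hwle
    -- approximating sequence
    set c : ℕ → ℝ := fun n => 1 - 1 / (n + 2) with hc
    have hc01 : ∀ n : ℕ, 0 ≤ c n ∧ c n < 1 := by
      intro n
      constructor
      · have h2 : (1 : ℝ) / (n + 2) ≤ 1 / 2 := by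
          apply div_le_div_of_nonneg_left one_pos.le two_pos
          · linarith [Nat.cast_nonneg (α := ℝ) n]
        simp only [hc]; linarith
      · have : (0 : ℝ) < 1 / (n + 2) := by positivity
        simp only [hc]; linarith
    set wseq : ℕ → ℂ := fun n => f l + (c n : ℂ) * (w - f l) with hwseq
    have hwmem : ∀ n, wseq n ∈ Metric.ball (f l) s₀ := by
      intro n
      rw [Metric.mem_ball, dist_eq_norm]
      have : wseq n - f l = (c n : ℂ) * (w - f l) := by ring
      rw [this, norm_mul, Complex.norm_real, Real.norm_eq_abs,
        abs_of_nonneg (hc01 n).1]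
      calc c n * ‖w - f l‖ < 1 * ‖w - f l‖ := by
            exact mul_lt_mul_of_pos_right (hc01 n).2 hwpos
        _ = ‖w - f l‖ := one_mul _
        _ ≤ s₀ := hwle
    have hwtend : Filter.Tendsto wseq Filter.atTop (nhds w) := by
      have hctend : Filter.Tendsto c Filter.atTop (nhds 1) := by
        have h1 : Filter.Tendsto (fun n : ℕ => 1 / ((n : ℝ) + 2)) Filter.atTop (nhds 0) := by
          apply Filter.Tendsto.div_atTop tendsto_const_nhds
          exact Filter.tendsto_atTop_add_const_right _ 2 tendsto_natCast_atTop_atTop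
        have := Filter.Tendsto.const_sub (1 : ℝ) h1
        rw [sub_zero] at this
        exact this
      have : Filter.Tendsto (fun n => ((c n : ℂ))) Filter.atTop (nhds (1 : ℂ)) := by
        exact_mod_cast (Complex.continuous_ofReal.continuousAt.tendsto.comp hctend)
      have h2 : Filter.Tendsto (fun n => (c n : ℂ) * (w - f l)) Filter.atTop
          (nhds ((1 : ℂ) * (w - f l))) := this.mul tendsto_const_nhds
      have h3 := h2.const_add (f l)
      have h4 : f l + (1 : ℂ) * (w - f l) = w := by ring
      rw [h4] at h3
      exact h3
    -- preimages stay in a compact subset of B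
    set zseq : ℕ → ℂ := fun n => g (wseq n) with hz
    have hzmem : ∀ n, zseq n ∈ Metric.closedBall l (r / 2) := by
      intro n
      rw [Metric.mem_closedBall, dist_eq_norm]
      have hfl : f l ∈ Metric.ball (f l) s₀ := Metric.mem_ball_self hs₀pos
      have := hlip (Metric.ball (f l) s₀) (convex_ball _ _) hball
        (f l) hfl (wseq n) (hwmem n)
      rw [hgl] at this
      calc ‖zseq n - l‖ ≤ τ⁻¹ * ‖wseq n - f l‖ := this
        _ ≤ τ⁻¹ * s₀ := by
            apply mul_le_mul_of_nonneg_left _ (by positivity)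
            rw [← dist_eq_norm]
            exact (Metric.mem_ball.mp (hwmem n)).le
        _ ≤ τ⁻¹ * (τ * r / 2) := by
            apply mul_le_mul_of_nonneg_left hs₀le (by positivity)
        _ = r / 2 := by field_simp
    obtain ⟨z, hzball, φ, hφmono, hφtend⟩ :=
      (ProperSpace.isCompact_closedBall l (r / 2)).tendsto_subseq hzmem
    have hzB : z ∈ B := by
      rw [hB, Metric.mem_ball]
      calc dist z l ≤ r / 2 := Metric.mem_closedBall.mp hzball
        _ < r := by linarith
    refine ⟨z, hzB, ?_⟩
    have hcont : ContinuousAt f z := (hana z hzB).continuousAt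
    have h1 : Filter.Tendsto (fun n => f (zseq (φ n))) Filter.atTop (nhds (f z)) :=
      hcont.tendsto.comp hφtend
    have h2 : ∀ n, f (zseq (φ n)) = wseq (φ n) := by
      intro n
      exact (hkey (wseq (φ n)) (hball (hwmem (φ n)))).2.1
    have h3 : Filter.Tendsto (fun n => wseq (φ n)) Filter.atTop (nhds w) :=
      hwtend.comp hφmono.tendsto_atTop
    rw [Filter.tendsto_congr h2] at h1
    exact tendsto_nhds_unique h1 h3
  -- s₀ must equal τ * r / 2
  have hs₀eq : s₀ = τ * r / 2 := by
    by_contra hne'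
    have hlt : s₀ < τ * r / 2 := lt_of_le_of_ne hs₀le hne'
    obtain ⟨δ, hδpos, hδsub⟩ :=
      (isCompact_closedBall (f l) s₀).exists_thickening_subset_open hIopen hcball
    have hthick : Metric.ball (f l) (δ + s₀) ⊆ I := by
      rw [← thickening_closedBall hδpos hs₀0]
      exact hδsub
    set s' := min (τ * r / 2) (δ + s₀) with hs'
    have hs'S : s' ∈ S := by
      refine ⟨min_le_left _ _, ?_⟩
      exact (Metric.ball_subset_ball (min_le_right _ _)).trans hthick
    have : s' ≤ s₀ := le_csSup hSbdd hs'S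
    have : s₀ < s' := lt_min hlt (by linarith)
    linarith
  -- conclude
  have hsub : Metric.ball (f l) (τ * r / 4) ⊆ Metric.ball (f l) s₀ := by
    apply Metric.ball_subset_ball
    rw [hs₀eq]
    nlinarith
  exact hsub.trans hball
end

section
/- Every Lipschitz curve in ℝ² is 1-admissible: if G = {ζ·(t + i·f(t)) : t ∈ I} for a finite interval I, a Lipschitz function f : I → ℝ with Lipschitz constant M, and |ζ| = 1, then there is a constant C such that for all a ∈ ℝ² and R, σ > 0, the Lebesgue measure of {y ∉ G : 0 < dist(y, G) ≤ σ} ∩ D(a, R) is at most C·σ·R. -/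
/-!
Parameters of points of a bi-Lipschitz curve `Γ : ℝ → ℂ` that come near a disc of radius `R`
lie in an interval of length `O(R)`. Cutting that interval into `O(R / ρ)` pieces of length `ρ`
covers the `ρ`-neighbourhood of the relevant arc by `O(R / ρ)` discs of radius `O(ρ)`, of total
area `O(ρ R)`. After extending `f` to a Lipschitz function on all of `ℝ`, the rotated graph is
bi-Lipschitz, and the `σ`-collar lies in its `2σ`-neighbourhood.
-/

open MeasureTheory Metric Set
open scoped NNReal

theorem Icc_subset_biUnion_range_closedBall {u v δ : ℝ} (hδ : 0 < δ) :
    Icc u v ⊆ ⋃ k ∈ Finset.range (⌊(v - u) / δ⌋₊ + 1), closedBall (u + k * δ) δ := by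
  intro t ⟨hut, htv⟩
  set k := ⌊(t - u) / δ⌋₊
  have hk : (k : ℝ) * δ ≤ t - u := (le_div_iff₀ hδ).1 (Nat.floor_le (by positivity))
  have hk' : t - u < (k + 1) * δ := (div_lt_iff₀ hδ).1 (Nat.lt_floor_add_one _)
  have hkN : k ≤ ⌊(v - u) / δ⌋₊ := Nat.floor_mono (by gcongr)
  refine mem_biUnion (Finset.mem_range.2 (Nat.lt_succ_of_le hkN)) ?_
  rw [Real.closedBall_eq_Icc, mem_Icc]
  constructor <;> linarith

theorem LipschitzWith.thickening_image_Icc_subset {E : Type*} [PseudoMetricSpace E]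
    {K : ℝ≥0} {Γ : ℝ → E} (hΓ : LipschitzWith K Γ) (u v : ℝ) {δ : ℝ} (hδ : 0 < δ) (ρ : ℝ) :
    thickening ρ (Γ '' Icc u v) ⊆
      ⋃ k ∈ Finset.range (⌊(v - u) / δ⌋₊ + 1), ball (Γ (u + k * δ)) (K * δ + ρ) := by
  intro y hy
  obtain ⟨_, ⟨t, ht, rfl⟩, hyt⟩ := mem_thickening_iff.1 hy
  obtain ⟨k, hk, htk⟩ := mem_iUnion₂.1 (Icc_subset_biUnion_range_closedBall hδ ht)
  refine mem_biUnion hk (mem_ball.2 ?_)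
  calc dist y (Γ (u + k * δ)) ≤ dist y (Γ t) + dist (Γ t) (Γ (u + k * δ)) := dist_triangle ..
    _ < ρ + K * δ :=
      add_lt_add_of_lt_of_le hyt
        ((hΓ.dist_le_mul _ _).trans (mul_le_mul_of_nonneg_left htk K.coe_nonneg))
    _ = K * δ + ρ := add_comm ..

theorem Complex.volume_ball_eq_ofReal (a : ℂ) {r : ℝ} (hr : 0 ≤ r) :
    volume (ball a r) = ENNReal.ofReal (Real.pi * r ^ 2) := by
  rw [Complex.volume_ball, ENNReal.ofReal_mul Real.pi_pos.le, ENNReal.ofReal_pow hr, mul_comm,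
    ← NNReal.coe_real_pi, ENNReal.ofReal_coe_nnreal]

theorem Complex.volume_biUnion_ball_le (N : ℕ) (c : ℕ → ℂ) {r : ℝ} (hr : 0 ≤ r) :
    volume (⋃ k ∈ Finset.range N, ball (c k) r) ≤ ENNReal.ofReal (N * (Real.pi * r ^ 2)) := by
  calc volume (⋃ k ∈ Finset.range N, ball (c k) r)
      ≤ ∑ k ∈ Finset.range N, volume (ball (c k) r) := measure_biUnion_finset_le _ _
    _ = ENNReal.ofReal (N * (Real.pi * r ^ 2)) := by
      simp only [Complex.volume_ball_eq_ofReal _ hr, Finset.sum_const, Finset.card_range,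
        nsmul_eq_mul, ENNReal.ofReal_mul (Nat.cast_nonneg N), ENNReal.ofReal_natCast]

theorem LipschitzWith.volume_thickening_image_Icc_le {K : ℝ≥0} {Γ : ℝ → ℂ}
    (hΓ : LipschitzWith K Γ) {u v : ℝ} (huv : u ≤ v) {ρ : ℝ} (hρ : 0 < ρ) :
    volume (thickening ρ (Γ '' Icc u v)) ≤
      ENNReal.ofReal (Real.pi * (K + 1) ^ 2 * ρ * (v - u + ρ)) := by
  have hN : (⌊(v - u) / ρ⌋₊ + 1 : ℝ) * ρ ≤ v - u + ρ := by
    have := (le_div_iff₀ hρ).1 (Nat.floor_le (div_nonneg (sub_nonneg.2 huv) hρ.le))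
    linarith
  calc volume (thickening ρ (Γ '' Icc u v))
      ≤ volume (⋃ k ∈ Finset.range (⌊(v - u) / ρ⌋₊ + 1), ball (Γ (u + k * ρ)) (K * ρ + ρ)) :=
        measure_mono (hΓ.thickening_image_Icc_subset u v hρ ρ)
    _ ≤ ENNReal.ofReal ((⌊(v - u) / ρ⌋₊ + 1 : ℕ) * (Real.pi * (K * ρ + ρ) ^ 2)) :=
        Complex.volume_biUnion_ball_le _ _ (by positivity)
    _ = ENNReal.ofReal (Real.pi * (K + 1) ^ 2 * ρ * ((⌊(v - u) / ρ⌋₊ + 1 : ℝ) * ρ)) := by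
      congr 1; push_cast; ring
    _ ≤ ENNReal.ofReal (Real.pi * (K + 1) ^ 2 * ρ * (v - u + ρ)) := by gcongr

theorem AntilipschitzWith.thickening_image_inter_ball_subset {E : Type*} [PseudoMetricSpace E]
    {K : ℝ≥0} {Γ : ℝ → E} (hΓ : AntilipschitzWith K Γ) (s : Set ℝ) (a : E) {ρ R t₀ : ℝ}
    (ht₀ : dist (Γ t₀) a < ρ + R) :
    thickening ρ (Γ '' s) ∩ ball a R ⊆
      thickening ρ (Γ '' Icc (t₀ - 2 * K * (ρ + R)) (t₀ + 2 * K * (ρ + R))) := by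
  rintro y ⟨hy, hya⟩
  obtain ⟨_, ⟨t, -, rfl⟩, hyt⟩ := mem_thickening_iff.1 hy
  have htt₀ : dist t t₀ ≤ 2 * K * (ρ + R) :=
    calc dist t t₀ ≤ K * dist (Γ t) (Γ t₀) := hΓ.le_mul_dist t t₀
      _ ≤ K * (dist (Γ t) y + dist y a + dist a (Γ t₀)) := by
        gcongr; exact dist_triangle4 ..
      _ ≤ 2 * K * (ρ + R) := by
        rw [dist_comm (Γ t), dist_comm a]
        have := mem_ball.1 hya
        nlinarith [K.coe_nonneg]
  refine mem_thickening_iff.2 ⟨Γ t, mem_image_of_mem Γ ?_, hyt⟩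
  rw [← Real.closedBall_eq_Icc]
  exact htt₀

theorem volume_thickening_image_inter_ball_le {K K' : ℝ≥0} {Γ : ℝ → ℂ}
    (hΓ : LipschitzWith K Γ) (hΓ' : AntilipschitzWith K' Γ) (s : Set ℝ) (a : ℂ) {ρ R : ℝ}
    (hρ : 0 < ρ) (hR : 0 < R) :
    volume (thickening ρ (Γ '' s) ∩ ball a R) ≤
      ENNReal.ofReal (Real.pi * (K + 1) ^ 2 * (8 * K' + 1) * ρ * R) := by
  have hC : 1 ≤ (K + 1 : ℝ) ^ 2 * (8 * K' + 1) := by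
    nlinarith [K.coe_nonneg, K'.coe_nonneg, mul_nonneg K.coe_nonneg K'.coe_nonneg]
  rcases le_or_gt ρ R with hρR | hRρ
  · rcases (thickening ρ (Γ '' s) ∩ ball a R).eq_empty_or_nonempty with h | ⟨y, hy, hya⟩
    · simp [h]
    obtain ⟨_, ⟨t₀, -, rfl⟩, hyt₀⟩ := mem_thickening_iff.1 hy
    have ht₀ : dist (Γ t₀) a < ρ + R := by
      linarith [dist_triangle_left (Γ t₀) a y, mem_ball.1 hya]
    set c := 2 * K' * (ρ + R)
    calc volume (thickening ρ (Γ '' s) ∩ ball a R)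
        ≤ volume (thickening ρ (Γ '' Icc (t₀ - c) (t₀ + c))) :=
          measure_mono (hΓ'.thickening_image_inter_ball_subset s a ht₀)
      _ ≤ ENNReal.ofReal (Real.pi * (K + 1) ^ 2 * ρ * (t₀ + c - (t₀ - c) + ρ)) :=
          hΓ.volume_thickening_image_Icc_le (by linarith [show 0 ≤ c by positivity]) hρ
      _ ≤ ENNReal.ofReal (Real.pi * (K + 1) ^ 2 * (8 * K' + 1) * ρ * R) := by
          refine ENNReal.ofReal_le_ofReal ?_
          calc Real.pi * (K + 1) ^ 2 * ρ * (t₀ + c - (t₀ - c) + ρ)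
              = Real.pi * (K + 1) ^ 2 * ρ * (4 * K' * (ρ + R) + ρ) := by ring
            _ ≤ Real.pi * (K + 1) ^ 2 * ρ * (4 * K' * (R + R) + R) := by gcongr
            _ = _ := by ring
  · calc volume (thickening ρ (Γ '' s) ∩ ball a R) ≤ volume (ball a R) :=
          measure_mono inter_subset_right
      _ = ENNReal.ofReal (Real.pi * R ^ 2) := Complex.volume_ball_eq_ofReal a hR.le
      _ ≤ ENNReal.ofReal (Real.pi * (K + 1) ^ 2 * (8 * K' + 1) * ρ * R) := by
          refine ENNReal.ofReal_le_ofReal ?_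
          calc Real.pi * R ^ 2 = Real.pi * 1 * R * R := by ring
            _ ≤ Real.pi * 1 * ρ * R := by gcongr
            _ ≤ Real.pi * ((K + 1) ^ 2 * (8 * K' + 1)) * ρ * R := by gcongr
            _ = _ := by ring

theorem setOf_infDist_le_subset_thickening {X : Type*} [PseudoMetricSpace X] {E : Set X}
    {σ ρ : ℝ} (hσρ : σ < ρ) : {y | 0 < infDist y E ∧ infDist y E ≤ σ} ⊆ thickening ρ E := by
  rintro y ⟨hpos, hle⟩
  have hE : E.Nonempty := nonempty_iff_ne_empty.2 fun hE => by simp [hE] at hpos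
  exact (mem_thickening_iff_infDist_lt hE).2 (hle.trans_lt hσρ)

def rotatedGraph (ζ : ℂ) (g : ℝ → ℝ) (t : ℝ) : ℂ := ζ * (t + g t * Complex.I)

theorem dist_rotatedGraph {ζ : ℂ} (hζ : ‖ζ‖ = 1) (g : ℝ → ℝ) (t s : ℝ) :
    dist (rotatedGraph ζ g t) (rotatedGraph ζ g s) = ‖(⟨t - s, g t - g s⟩ : ℂ)‖ := by
  rw [dist_eq_norm, rotatedGraph, rotatedGraph, ← mul_sub, norm_mul, hζ, one_mul]
  congr 1
  apply Complex.ext <;> simp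

theorem antilipschitzWith_rotatedGraph {ζ : ℂ} (hζ : ‖ζ‖ = 1) (g : ℝ → ℝ) :
    AntilipschitzWith 1 (rotatedGraph ζ g) :=
  AntilipschitzWith.of_le_mul_dist fun t s => by
    rw [dist_rotatedGraph hζ, NNReal.coe_one, one_mul, Real.dist_eq]
    exact Complex.abs_re_le_norm (⟨t - s, g t - g s⟩ : ℂ)

theorem LipschitzWith.rotatedGraph {M : ℝ≥0} {g : ℝ → ℝ} (hg : LipschitzWith M g) {ζ : ℂ}
    (hζ : ‖ζ‖ = 1) : LipschitzWith (1 + M) (rotatedGraph ζ g) :=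
  LipschitzWith.of_dist_le_mul fun t s => by
    rw [dist_rotatedGraph hζ, NNReal.coe_add, NNReal.coe_one, one_add_mul]
    calc ‖(⟨t - s, g t - g s⟩ : ℂ)‖ ≤ |t - s| + |g t - g s| :=
          Complex.norm_le_abs_re_add_abs_im _
      _ ≤ dist t s + M * dist t s := by
          rw [← Real.dist_eq, ← Real.dist_eq]
          gcongr
          exact hg.dist_le_mul t s

/-- Every Lipschitz curve in the plane is `1`-admissible: the `σ`-collar of the curve
intersected with a disc of radius `R` has planar measure at most `C σ R`. -/
theorem lipschitz_curve_one_admissible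
    (t₀ t₁ : ℝ) (f : ℝ → ℝ) (M : NNReal)
    (hf : LipschitzOnWith M f (Set.Icc t₀ t₁))
    (ζ : ℂ) (hζ : ‖ζ‖ = 1) (G : Set ℂ)
    (hG : G = (fun t : ℝ => ζ * (t + f t * Complex.I)) '' Set.Icc t₀ t₁) :
    ∃ C > (0 : ℝ), ∀ (a : ℂ) (R σ : ℝ), 0 < R → 0 < σ →
      MeasureTheory.volume
        ({y : ℂ | y ∉ G ∧ 0 < Metric.infDist y G ∧ Metric.infDist y G ≤ σ} ∩
          Metric.ball a R)
        ≤ ENNReal.ofReal (C * σ * R) := by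
  obtain ⟨g, hg, hfg⟩ := hf.extend_real
  have hG' : G = rotatedGraph ζ g '' Icc t₀ t₁ :=
    hG.trans (image_congr fun t ht => by rw [rotatedGraph, hfg ht])
  refine ⟨18 * Real.pi * (M + 2) ^ 2, by positivity, fun a R σ hR hσ => ?_⟩
  have hcollar : {y : ℂ | y ∉ G ∧ 0 < infDist y G ∧ infDist y G ≤ σ} ⊆ thickening (2 * σ) G :=
    fun y hy => setOf_infDist_le_subset_thickening (by linarith) hy.2
  calc volume ({y : ℂ | y ∉ G ∧ 0 < infDist y G ∧ infDist y G ≤ σ} ∩ ball a R)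
      ≤ volume (thickening (2 * σ) G ∩ ball a R) := measure_mono (inter_subset_inter_left _ hcollar)
    _ ≤ ENNReal.ofReal (Real.pi * ((1 + M : ℝ≥0) + 1) ^ 2 * (8 * (1 : ℝ≥0) + 1) * (2 * σ) * R) := by
        rw [hG']
        exact volume_thickening_image_inter_ball_le (hg.rotatedGraph hζ)
          (antilipschitzWith_rotatedGraph hζ g) _ a (by positivity) hR
    _ = ENNReal.ofReal (18 * Real.pi * (M + 2) ^ 2 * σ * R) := by
        congr 1; push_cast; ring
end
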